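/- In the pair model of C^∞(S^{1|1}), the composition rule for superdifferential operators holds: for all integers m, n ≥ 0 and all superfunctions F and G, the composition of the operators h ↦ F ⋆ η^m(h) and h ↦ G ⋆ η^n(h) equals the operator h ↦ Σ_{k=0}^{m} (m choose k)_s · (F ⋆ η^k(σ^{m−k}(G))) ⋆ η^{m+n−k}(h). -/

import Mathlib

/-- Pair model of `C^∞(S^{1|1})`: the pair `(f, g)` represents the superfunction
`F = f(x) + g(x)θ`. -/
abbrev SuperFun : Type := (ℝ → ℝ) × (ℝ → ℝ)

/-- A pair `(f, g)` models a superfunction when both components are smooth and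
`2π`-periodic. -/
def IsSuperFun (F : SuperFun) : Prop :=
  ContDiff ℝ (⊤ : ℕ∞) F.1 ∧ ContDiff ℝ (⊤ : ℕ∞) F.2 ∧
    Function.Periodic F.1 (2 * Real.pi) ∧ Function.Periodic F.2 (2 * Real.pi)

/-- The product `(f, g) ⋆ (p, q) = (f·p, f·q + g·p)`. -/
def sstar (F G : SuperFun) : SuperFun :=
  (F.1 * G.1, F.1 * G.2 + F.2 * G.1)

/-- The parity involution `σ(f, g) = (f, −g)`. -/
def ssigma (F : SuperFun) : SuperFun := (F.1, -F.2)

/-- The odd vector field `η = ∂/∂θ + θ·∂/∂x`, acting by `η(f, g) = (g, f′)`. -/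
noncomputable def seta (F : SuperFun) : SuperFun := (F.2, deriv F.1)

/-- The super binomial coefficient `(m choose k)_s`. -/
def sbinom (m k : ℕ) : ℕ :=
  if k % 2 = 0 ∨ m % 2 = 1 then (m / 2).choose (k / 2) else 0

def Sm (F : SuperFun) : Prop := ContDiff ℝ (⊤ : ℕ∞) F.1 ∧ ContDiff ℝ (⊤ : ℕ∞) F.2

lemma Sm.sstar {F G : SuperFun} (hF : Sm F) (hG : Sm G) : Sm (sstar F G) :=
  ⟨hF.1.mul hG.1, (hF.1.mul hG.2).add (hF.2.mul hG.1)⟩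
lemma Sm.ssigma {F : SuperFun} (hF : Sm F) : Sm (ssigma F) := ⟨hF.1, hF.2.neg⟩
lemma Sm.seta {F : SuperFun} (hF : Sm F) : Sm (seta F) :=
  ⟨hF.2, (contDiff_succ_iff_deriv.mp (hF.1.of_le (by simp))).2.2⟩
lemma Sm.seta_iter {F : SuperFun} (hF : Sm F) (k : ℕ) : Sm (_root_.seta^[k] F) := by
  induction k with
  | zero => exact hF
  | succ k ih => rw [Function.iterate_succ_apply']; exact ih.seta
lemma Sm.ssigma_iter {F : SuperFun} (hF : Sm F) (k : ℕ) : Sm (_root_.ssigma^[k] F) := by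
  induction k with
  | zero => exact hF
  | succ k ih => rw [Function.iterate_succ_apply']; exact ih.ssigma
lemma Sm.zsmul {F : SuperFun} (hF : Sm F) (c : ℤ) : Sm (c • F) :=
  ⟨hF.1.const_smul c, hF.2.const_smul c⟩
lemma Sm.add {F G : SuperFun} (hF : Sm F) (hG : Sm G) : Sm (F + G) :=
  ⟨hF.1.add hG.1, hF.2.add hG.2⟩
lemma Sm.zero : Sm (0 : SuperFun) := ⟨contDiff_const, contDiff_const⟩

lemma seta_add {A B : SuperFun} (hA : Sm A) (hB : Sm B) : seta (A + B) = seta A + seta B := by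
  unfold seta
  refine Prod.ext rfl ?_
  funext x
  exact deriv_fun_add (hA.1.differentiable (by simp) x) (hB.1.differentiable (by simp) x)

lemma seta_zsmul {A : SuperFun} (hA : Sm A) (c : ℤ) : seta (c • A) = c • seta A := by
  unfold seta
  refine Prod.ext rfl ?_
  funext x
  exact deriv_const_smul c (hA.1.differentiable (by simp) x)

lemma seta_sstar {A B : SuperFun} (hA : Sm A) (hB : Sm B) :
    seta (sstar A B) = sstar (seta A) B + sstar (ssigma A) (seta B) := by
  unfold seta sstar ssigma
  refine Prod.ext ?_ ?_
  · funext x; simp; ring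
  · funext x
    simp only [Pi.add_apply, Pi.mul_apply, Pi.neg_apply]
    have hd : deriv (A.1 * B.1) x = deriv A.1 x * B.1 x + A.1 x * deriv B.1 x :=
      deriv_fun_mul (hA.1.differentiable (by simp) x) (hB.1.differentiable (by simp) x)
    rw [hd]
    simp only [Prod.snd_add, Pi.add_apply, Pi.mul_apply, Pi.neg_apply]
    ring

lemma seta_neg (A : SuperFun) : seta (-A) = - seta A := by
  unfold seta
  refine Prod.ext rfl ?_
  funext x
  exact deriv.neg

lemma ssigma_seta (A : SuperFun) : ssigma (seta A) = - seta (ssigma A) := by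
  simp [seta, ssigma]

lemma ssigma_seta_iter {A : SuperFun} (hA : Sm A) (k : ℕ) :
    ssigma (seta^[k] A) = ((-1 : ℤ) ^ k) • seta^[k] (ssigma A) := by
  induction k with
  | zero => simp
  | succ k ih =>
    rw [Function.iterate_succ_apply', ssigma_seta, ih,
      seta_zsmul ((hA.ssigma.seta_iter k)),
      ← Function.iterate_succ_apply' seta k (ssigma A),
      pow_succ, mul_neg_one, neg_smul]

lemma sstar_zero_right (F : SuperFun) : sstar F 0 = 0 := by
  simp [sstar]

lemma sstar_add_right (F A B : SuperFun) : sstar F (A + B) = sstar F A + sstar F B := by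
  unfold sstar
  refine Prod.ext ?_ ?_ <;> funext x <;>
    simp only [Prod.fst_add, Prod.snd_add, Pi.add_apply, Pi.mul_apply] <;> ring

lemma sstar_zsmul_left (c : ℤ) (A B : SuperFun) : sstar (c • A) B = c • sstar A B := by
  refine Prod.ext ?_ ?_
  · show (c • A.1) * B.1 = c • (A.1 * B.1)
    exact smul_mul_assoc c _ _
  · show (c • A.1) * B.2 + (c • A.2) * B.1 = c • (A.1 * B.2 + A.2 * B.1)
    rw [smul_mul_assoc, smul_mul_assoc, smul_add]

lemma sstar_zsmul_right (c : ℤ) (A B : SuperFun) : sstar A (c • B) = c • sstar A B := by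
  refine Prod.ext ?_ ?_
  · show A.1 * (c • B.1) = c • (A.1 * B.1)
    exact mul_smul_comm c _ _
  · show A.1 * (c • B.2) + A.2 * (c • B.1) = c • (A.1 * B.2 + A.2 * B.1)
    rw [mul_smul_comm, mul_smul_comm, smul_add]

lemma sstar_assoc (F X Y : SuperFun) : sstar F (sstar X Y) = sstar (sstar F X) Y := by
  unfold sstar
  refine Prod.ext ?_ ?_ <;> funext x <;>
    simp only [Pi.add_apply, Pi.mul_apply] <;> ring

lemma sstar_sum {ι : Type*} (F : SuperFun) (s : Finset ι) (f : ι → SuperFun) :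
    sstar F (∑ i ∈ s, f i) = ∑ i ∈ s, sstar F (f i) := by
  classical
  induction s using Finset.induction_on with
  | empty => simp [sstar_zero_right]
  | insert _ _ h ih => rw [Finset.sum_insert h, Finset.sum_insert h, sstar_add_right, ih]

lemma Sm.sum {ι : Type*} {s : Finset ι} {f : ι → SuperFun} (hf : ∀ i ∈ s, Sm (f i)) :
    Sm (∑ i ∈ s, f i) := by
  classical
  induction s using Finset.induction_on with
  | empty => simpa using Sm.zero
  | insert _ _ h ih =>
    rw [Finset.sum_insert h]
    exact (hf _ (Finset.mem_insert_self _ _)).add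
      (ih fun i hi => hf i (Finset.mem_insert_of_mem hi))

lemma seta_zero : seta 0 = 0 := by
  refine Prod.ext rfl ?_
  funext x
  show deriv (fun _ => (0:ℝ)) x = 0
  simp

lemma seta_sum {ι : Type*} (s : Finset ι) (f : ι → SuperFun) (hf : ∀ i ∈ s, Sm (f i)) :
    seta (∑ i ∈ s, f i) = ∑ i ∈ s, seta (f i) := by
  classical
  induction s using Finset.induction_on with
  | empty => simpa using seta_zero
  | insert _ _ h ih =>
    rename_i a s'
    rw [Finset.sum_insert h, Finset.sum_insert h,
      seta_add (hf _ (Finset.mem_insert_self _ _))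
        (Sm.sum fun i hi => hf i (Finset.mem_insert_of_mem hi)),
      ih fun i hi => hf i (Finset.mem_insert_of_mem hi)]

lemma sbinom_ee (a b : ℕ) : sbinom (2*a) (2*b) = a.choose b := by
  have e1 : 2*a/2 = a := by omega
  have e2 : 2*b/2 = b := by omega
  have e3 : (2*b) % 2 = 0 := by omega
  simp [sbinom, e1, e2, e3]
lemma sbinom_eo (a b : ℕ) : sbinom (2*a) (2*b+1) = 0 := by
  have e3 : ¬((2*b+1) % 2 = 0 ∨ (2*a) % 2 = 1) := by omega
  rw [sbinom, if_neg e3]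
lemma sbinom_oe (a b : ℕ) : sbinom (2*a+1) (2*b) = a.choose b := by
  have e1 : (2*a+1)/2 = a := by omega
  have e2 : 2*b/2 = b := by omega
  have e3 : (2*b) % 2 = 0 := by omega
  simp [sbinom, e1, e2, e3]
lemma sbinom_oo (a b : ℕ) : sbinom (2*a+1) (2*b+1) = a.choose b := by
  have e1 : (2*a+1)/2 = a := by omega
  have e2 : (2*b+1)/2 = b := by omega
  have e3 : (2*a+1) % 2 = 1 := by omega
  simp [sbinom, e1, e2, e3]

lemma sbinom_zero (m : ℕ) : sbinom m 0 = 1 := by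
  simp [sbinom]

lemma sbinom_succ_self (m : ℕ) : sbinom m (m+1) = 0 := by
  rcases Nat.even_or_odd m with ⟨a, ha⟩ | ⟨a, ha⟩
  · have : m = 2*a := by omega
    subst this
    exact sbinom_eo a a
  · subst ha
    have : 2*a+1+1 = 2*(a+1) := by ring
    rw [this, sbinom_oe, Nat.choose_succ_self]

lemma sbinom_rec (m k : ℕ) :
    (sbinom (m+1) (k+1) : ℤ) = sbinom m k + (-1)^(k+1) * sbinom m (k+1) := by
  rcases Nat.even_or_odd m with ⟨a, ha⟩ | ⟨a, ha⟩ <;>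
    rcases Nat.even_or_odd k with ⟨b, hb⟩ | ⟨b, hb⟩
  · have hm : m = 2*a := by omega
    have hk : k = 2*b := by omega
    subst hm hk
    rw [show 2*a+1 = 2*a+1 from rfl, show 2*b+1 = 2*b+1 from rfl,
      sbinom_oo, sbinom_ee, sbinom_eo]
    push_cast
    ring
  · have hm : m = 2*a := by omega
    subst hm hb
    rw [show 2*b+1+1 = 2*(b+1) from by ring, show 2*a+1 = 2*a+1 from rfl]
    rw [sbinom_oe, sbinom_eo, sbinom_ee]
    have : ((-1:ℤ))^(2*(b+1)) = 1 := by
      rw [pow_mul]; norm_num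
    rw [this]
    push_cast
    ring
  · have hk : k = 2*b := by omega
    subst ha hk
    rw [show 2*a+1+1 = 2*(a+1) from by ring]
    rw [sbinom_eo, sbinom_oe, sbinom_oo]
    have : ((-1:ℤ))^(2*b+1) = -1 := by
      rw [pow_succ, pow_mul]; norm_num
    rw [this]
    push_cast
    ring
  · subst ha hb
    rw [show 2*a+1+1 = 2*(a+1) from by ring, show 2*b+1+1 = 2*(b+1) from by ring]
    rw [sbinom_ee, sbinom_oo, sbinom_oe]
    have : ((-1:ℤ))^(2*(b+1)) = 1 := by
      rw [pow_mul]; norm_num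
    rw [this, Nat.choose_succ_succ]
    push_cast
    ring

lemma leibniz (m : ℕ) (G K : SuperFun) (hG : Sm G) (hK : Sm K) :
    seta^[m] (sstar G K)
      = ∑ k ∈ Finset.range (m+1),
          (sbinom m k : ℤ) • sstar (seta^[k] (ssigma^[m-k] G)) (seta^[m-k] K) := by
  induction m with
  | zero => simp [sbinom_zero]
  | succ m ih =>
    set A : ℕ → SuperFun :=
      fun j => sstar (seta^[j] (ssigma^[m+1-j] G)) (seta^[m+1-j] K) with hA
    have hT : ∀ k : ℕ, Sm (sstar (seta^[k] (ssigma^[m-k] G)) (seta^[m-k] K)) :=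
      fun k => ((hG.ssigma_iter (m-k)).seta_iter k).sstar (hK.seta_iter (m-k))
    rw [Function.iterate_succ_apply', ih,
      seta_sum _ _ (fun k _ => (hT k).zsmul _)]
    have key : ∀ k ∈ Finset.range (m+1),
        seta ((sbinom m k : ℤ) • sstar (seta^[k] (ssigma^[m-k] G)) (seta^[m-k] K))
          = (sbinom m k : ℤ) • A (k+1) + ((-1 : ℤ)^k * (sbinom m k : ℤ)) • A k := by
      intro k hk
      have hkm : k ≤ m := Nat.lt_succ_iff.mp (Finset.mem_range.mp hk)
      have h1 : m + 1 - (k+1) = m - k := by omega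
      have h2 : m + 1 - k = (m - k) + 1 := by omega
      rw [hA]
      simp only []
      rw [h1, h2]
      rw [seta_zsmul (hT k),
        seta_sstar ((hG.ssigma_iter (m-k)).seta_iter k) (hK.seta_iter (m-k)),
        ← Function.iterate_succ_apply' seta k (ssigma^[m-k] G),
        ssigma_seta_iter (hG.ssigma_iter (m-k)) k,
        ← Function.iterate_succ_apply' ssigma (m-k) G,
        ← Function.iterate_succ_apply' seta (m-k) K,
        sstar_zsmul_left, smul_add, smul_smul,
        mul_comm ((sbinom m k : ℤ)) ((-1 : ℤ)^k)]
    rw [Finset.sum_congr rfl key, Finset.sum_add_distrib]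
    have expand : ∀ i ∈ Finset.range (m+1),
        (sbinom (m+1) (i+1) : ℤ) • A (i+1)
          = (sbinom m i : ℤ) • A (i+1)
            + ((-1 : ℤ)^(i+1) * (sbinom m (i+1) : ℤ)) • A (i+1) := by
      intro i _
      rw [sbinom_rec, add_smul]
    calc (∑ k ∈ Finset.range (m+1), (sbinom m k : ℤ) • A (k+1))
          + ∑ k ∈ Finset.range (m+1), ((-1 : ℤ)^k * (sbinom m k : ℤ)) • A k
        = (∑ k ∈ Finset.range (m+1), (sbinom m k : ℤ) • A (k+1))
          + ((∑ i ∈ Finset.range m, ((-1 : ℤ)^(i+1) * (sbinom m (i+1) : ℤ)) • A (i+1))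
            + ((-1 : ℤ)^0 * (sbinom m 0 : ℤ)) • A 0) := by
          rw [Finset.sum_range_succ' (fun k => ((-1 : ℤ)^k * (sbinom m k : ℤ)) • A k) m]
      _ = ∑ j ∈ Finset.range (m+1+1), (sbinom (m+1) j : ℤ) • A j := by
          rw [Finset.sum_range_succ' (fun j => (sbinom (m+1) j : ℤ) • A j) (m+1),
            Finset.sum_congr rfl expand, Finset.sum_add_distrib,
            Finset.sum_range_succ
              (fun i => ((-1 : ℤ)^(i+1) * (sbinom m (i+1) : ℤ)) • A (i+1)) m,
            sbinom_succ_self, sbinom_zero]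
          push_cast [sbinom_zero]
          simp only [pow_zero, one_mul, one_smul, Int.cast_zero, mul_zero, zero_smul, add_zero,
            Nat.cast_one]
          abel

/-- Composition rule for superdifferential operators: for all `m, n ≥ 0` and all
superfunctions `F`, `G`, the composition of the operators `h ↦ F ⋆ η^m(h)` and
`h ↦ G ⋆ η^n(h)` is the operator
`h ↦ Σ_{k=0}^{m} (m choose k)_s · (F ⋆ η^k(σ^{m−k}(G))) ⋆ η^{m+n−k}(h)`. -/
theorem stmt_12 (m n : ℕ) (F G : SuperFun) (hF : IsSuperFun F) (hG : IsSuperFun G)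
    (H : SuperFun) (hH : IsSuperFun H) :
    sstar F (seta^[m] (sstar G (seta^[n] H))) =
      ∑ k ∈ Finset.range (m + 1),
        sbinom m k • sstar (sstar F (seta^[k] (ssigma^[m - k] G))) (seta^[m + n - k] H) := by
  have hG' : Sm G := ⟨hG.1, hG.2.1⟩
  have hH' : Sm H := ⟨hH.1, hH.2.1⟩
  rw [leibniz m G (seta^[n] H) hG' (hH'.seta_iter n), sstar_sum]
  refine Finset.sum_congr rfl ?_
  intro k hk
  have hkm : k ≤ m := Nat.lt_succ_iff.mp (Finset.mem_range.mp hk)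
  rw [sstar_zsmul_right, sstar_assoc, ← Function.iterate_add_apply seta (m - k) n H,
    show m - k + n = m + n - k from by omega, natCast_zsmul]
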